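/- Let (Xₙ, Yₙ) be an irreducible aperiodic Markov chain on ℤ₊² and suppose there exist constants M^X, M^Y, c > 0, a function L : ℤ₊² → ℝ₊, and a function T : ℤ₊² → ℤ₊ with sup_{(x,y)} T(x,y)/L(x,y) < ∞, sup_{x ≤ M^X, y ≤ M^Y} E[L(X_{T(x,y)}, Y_{T(x,y)}) - L(x,y) | (X₀,Y₀)=(x,y)] < ∞, and E[L(X_{T(x,y)}, Y_{T(x,y)}) - L(x,y) | (X₀,Y₀)=(x,y)] ≤ -c·T(x,y) whenever x > M^X or y > M^Y. Then (Xₙ,Yₙ) is positive recurrent. -/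

import Mathlib

noncomputable def kpow {S : Type*} [DecidableEq S] (P : S → S → ℝ) : ℕ → S → S → ℝ
  | 0, s, s' => if s = s' then 1 else 0
  | n + 1, s, s' => ∑' u, P s u * kpow P n u s'

def IrreducibleKernel {S : Type*} [DecidableEq S] (P : S → S → ℝ) : Prop :=
  ∀ s s', ∃ n, 0 < kpow P n s s'

def AperiodicKernel {S : Type*} [DecidableEq S] (P : S → S → ℝ) : Prop :=
  ∀ s, ∃ N, ∀ n, N ≤ n → 0 < kpow P n s s

def PositiveRecurrent {S : Type*} (P : S → S → ℝ) : Prop :=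
  ∃ π : S → ℝ, (∀ s, 0 ≤ π s) ∧ (∑' s, π s = 1) ∧
    ∀ s', ∑' s, π s * P s s' = π s'

/-!
Work with `ℝ≥0∞`-valued kernels, where infinite sums need no summability side conditions.
Observed at the times `T`, the chain has kernel `Q s = P^{T s}(s, ·)`, and after dividing `L`
by `c` the hypotheses become Foster's drift condition `Q L + T ≤ L + b 𝟙_F` with `F` finite.
Summing the drift along the iterates of `Q` from a fixed state bounds the `T`-moment of their
Cesàro averages by `b` and gives them mass at least `1 / b` on `F`. A pointwise limit of these
averages along an ultrafilter therefore keeps mass on `F`, has finite `T`-moment (Fatou), and is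
sub-invariant, hence invariant, for `Q`. Counting the visits before time `T`,
`π t = ∑ s, ν s * ∑ k < T s, P^k(s, t)` is a `P`-invariant measure of total mass `∑ s, ν s * T s`;
normalised, it is a stationary distribution.
-/

open ENNReal Filter Topology Finset

theorem ENNReal.ofReal_add_natCast_le {x y z : ℝ} (hx : 0 ≤ x) {n : ℕ} (h : x + n ≤ y + z) :
    ENNReal.ofReal x + n ≤ ENNReal.ofReal y + ENNReal.ofReal z := by
  rw [← ENNReal.ofReal_natCast, ← ENNReal.ofReal_add hx n.cast_nonneg]
  exact (ENNReal.ofReal_le_ofReal h).trans ENNReal.ofReal_add_le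

namespace DiscreteKernel

variable {S : Type*}

def IsStochastic (P : S → S → ℝ≥0∞) : Prop := ∀ s, ∑' t, P s t = 1

noncomputable def push (P : S → S → ℝ≥0∞) (μ : S → ℝ≥0∞) (t : S) : ℝ≥0∞ := ∑' s, μ s * P s t

theorem tsum_push_mul (P : S → S → ℝ≥0∞) (μ f : S → ℝ≥0∞) :
    ∑' t, push P μ t * f t = ∑' s, μ s * ∑' t, P s t * f t := by
  simp only [push, ← ENNReal.tsum_mul_right, ← ENNReal.tsum_mul_left, mul_assoc]
  exact ENNReal.tsum_comm

theorem IsStochastic.tsum_push {P : S → S → ℝ≥0∞} (hP : IsStochastic P) (μ : S → ℝ≥0∞) :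
    ∑' t, push P μ t = ∑' s, μ s := by
  simpa [hP _] using tsum_push_mul P μ 1

theorem IsStochastic.le_one {P : S → S → ℝ≥0∞} (hP : IsStochastic P) (s t : S) : P s t ≤ 1 :=
  hP s ▸ ENNReal.le_tsum t

theorem IsStochastic.ne_top {P : S → S → ℝ≥0∞} (hP : IsStochastic P) (s t : S) : P s t ≠ ⊤ :=
  ((hP.le_one s t).trans_lt one_lt_top).ne

theorem tsum_mul_le_of_tendsto {ι : Type*} {l : Filter ι} [l.NeBot] {μ : ι → S → ℝ≥0∞}
    {ν : S → ℝ≥0∞} (hν : ∀ s, Tendsto (μ · s) l (𝓝 (ν s))) {f : S → ℝ≥0∞} (hf : ∀ s, f s ≠ ⊤)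
    {a : ι → ℝ≥0∞} {x : ℝ≥0∞} (ha : Tendsto a l (𝓝 x))
    (h : ∀ᶠ i in l, ∑' s, μ i s * f s ≤ a i) :
    ∑' s, ν s * f s ≤ x := by
  rw [ENNReal.tsum_eq_iSup_sum]
  refine iSup_le fun A => le_of_tendsto_of_tendsto
    (tendsto_finsetSum A fun s _ => ENNReal.Tendsto.mul_const (hν s) (Or.inr (hf s))) ha ?_
  filter_upwards [h] with i hi using (ENNReal.sum_le_tsum A).trans hi

theorem IsStochastic.push_eq_of_le {Q : S → S → ℝ≥0∞} (hQ : IsStochastic Q) {ν : S → ℝ≥0∞}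
    (hle : ∀ t, push Q ν t ≤ ν t) (hν : ∑' s, ν s ≠ ⊤) : push Q ν = ν := by
  by_contra hne
  obtain ⟨t, ht⟩ := Function.ne_iff.mp hne
  have hlt := ENNReal.tsum_lt_tsum (hQ.tsum_push ν ▸ hν) hle ((hle t).lt_of_ne ht)
  exact (hQ.tsum_push ν ▸ hlt).false

theorem exists_push_eq_tsum_eq_one {P : S → S → ℝ≥0∞} {π : S → ℝ≥0∞} (hπ : push P π = π)
    (h0 : ∑' s, π s ≠ 0) (htop : ∑' s, π s ≠ ⊤) :
    ∃ π' : S → ℝ≥0∞, push P π' = π' ∧ ∑' s, π' s = 1 := by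
  refine ⟨fun s => π s / ∑' s, π s, ?_, ?_⟩
  · ext t
    simp only [push, div_eq_mul_inv, mul_right_comm _ _ (P _ t), ENNReal.tsum_mul_right]
    exact congrArg (· * _) (congrFun hπ t)
  · simp only [div_eq_mul_inv, ENNReal.tsum_mul_right]
    exact ENNReal.mul_inv_cancel h0 htop

section OfReal

variable {P : S → S → ℝ}

theorem isStochastic_ofReal (hP0 : ∀ s t, 0 ≤ P s t) (hP1 : ∀ s, ∑' t, P s t = 1) :
    IsStochastic fun s t => ENNReal.ofReal (P s t) := fun s => by
  have hsum : Summable (P s) := by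
    by_contra h
    simpa [tsum_eq_zero_of_not_summable h] using hP1 s
  rw [← ENNReal.ofReal_tsum_of_nonneg (hP0 s) hsum, hP1 s, ENNReal.ofReal_one]

theorem positiveRecurrent_of_push_eq (hP0 : ∀ s t, 0 ≤ P s t) {π : S → ℝ≥0∞}
    (hπ : push (fun s t => ENNReal.ofReal (P s t)) π = π) (h1 : ∑' s, π s = 1) :
    PositiveRecurrent P := by
  have hπ_top : ∀ s, π s ≠ ⊤ := fun s => ne_top_of_le_ne_top one_ne_top (h1 ▸ ENNReal.le_tsum s)
  refine ⟨fun s => (π s).toReal, fun s => ENNReal.toReal_nonneg, ?_, fun t => ?_⟩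
  · rw [← ENNReal.tsum_toReal_eq hπ_top, h1, ENNReal.toReal_one]
  · calc ∑' s, (π s).toReal * P s t
        = (push (fun s t => ENNReal.ofReal (P s t)) π t).toReal := by
          rw [push, ENNReal.tsum_toReal_eq fun s => mul_ne_top (hπ_top s) ofReal_ne_top]
          simp only [ENNReal.toReal_mul, ENNReal.toReal_ofReal (hP0 _ _)]
      _ = (π t).toReal := by rw [hπ]

end OfReal

variable [DecidableEq S]

noncomputable def pow (P : S → S → ℝ≥0∞) : ℕ → S → S → ℝ≥0∞
  | 0, s, t => if s = t then 1 else 0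
  | n + 1, s, t => ∑' u, P s u * pow P n u t

theorem tsum_mul_pow_zero (μ : S → ℝ≥0∞) (P : S → S → ℝ≥0∞) (t : S) :
    ∑' s, μ s * pow P 0 s t = μ t := by
  simp [pow]

theorem tsum_pow_zero_mul (P : S → S → ℝ≥0∞) (s : S) (f : S → ℝ≥0∞) :
    ∑' t, pow P 0 s t * f t = f s := by
  simp [pow]

theorem pow_succ' (P : S → S → ℝ≥0∞) (n : ℕ) (s : S) :
    pow P (n + 1) s = push P (pow P n s) := by
  induction n generalizing s with
  | zero => ext t; simp [pow, push]
  | succ n ih =>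
    ext t
    calc pow P (n + 2) s t = ∑' u, P s u * push P (pow P n u) t := by
          rw [pow]; simp only [ih]
      _ = push P (pow P (n + 1) s) t := by
        simp only [push, pow, ← ENNReal.tsum_mul_left, ← ENNReal.tsum_mul_right, mul_assoc]
        exact ENNReal.tsum_comm

theorem isStochastic_pow {P : S → S → ℝ≥0∞} (hP : IsStochastic P) (n : ℕ) :
    IsStochastic (pow P n) := by
  induction n with
  | zero => intro s; simp [pow]
  | succ n ih => intro s; rw [pow_succ', hP.tsum_push, ih s]

section Drift

variable {Q : S → S → ℝ≥0∞} {L g : S → ℝ≥0∞} {F : Finset S} {b : ℝ≥0∞}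

theorem tsum_push_mul_add_le
    (hdrift : ∀ s, ∑' t, Q s t * L t + g s ≤ L s + if s ∈ F then b else 0) (μ : S → ℝ≥0∞) :
    ∑' t, push Q μ t * L t + ∑' s, μ s * g s ≤ ∑' s, μ s * L s + b * ∑ s ∈ F, μ s := by
  calc ∑' t, push Q μ t * L t + ∑' s, μ s * g s
      = ∑' s, μ s * (∑' t, Q s t * L t + g s) := by
        rw [tsum_push_mul, ← ENNReal.tsum_add]; simp only [mul_add]
    _ ≤ ∑' s, μ s * (L s + if s ∈ F then b else 0) :=
        ENNReal.tsum_le_tsum fun s => mul_le_mul_right (hdrift s) _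
    _ = ∑' s, μ s * L s + b * ∑ s ∈ F, μ s := by
        simp only [mul_add, ENNReal.tsum_add, mul_ite, mul_zero]
        rw [tsum_eq_sum (s := F) (fun s hs => if_neg hs), sum_ite_mem, inter_self, mul_sum]
        simp only [mul_comm]

theorem sum_range_tsum_pow_mul_le
    (hdrift : ∀ s, ∑' t, Q s t * L t + g s ≤ L s + if s ∈ F then b else 0) (p₀ : S) (n : ℕ) :
    ∑ k ∈ range n, ∑' s, pow Q k p₀ s * g s
      ≤ L p₀ + b * ∑ k ∈ range n, ∑ s ∈ F, pow Q k p₀ s := by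
  suffices ∑' s, pow Q n p₀ s * L s + ∑ k ∈ range n, ∑' s, pow Q k p₀ s * g s
      ≤ L p₀ + b * ∑ k ∈ range n, ∑ s ∈ F, pow Q k p₀ s from le_add_self.trans this
  induction n with
  | zero => simp [tsum_pow_zero_mul]
  | succ n ih =>
    have hstep := tsum_push_mul_add_le hdrift (pow Q n p₀)
    rw [← pow_succ'] at hstep
    calc ∑' s, pow Q (n + 1) p₀ s * L s + ∑ k ∈ range (n + 1), ∑' s, pow Q k p₀ s * g s
        = (∑' s, pow Q (n + 1) p₀ s * L s + ∑' s, pow Q n p₀ s * g s)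
            + ∑ k ∈ range n, ∑' s, pow Q k p₀ s * g s := by rw [sum_range_succ]; ring
      _ ≤ (∑' s, pow Q n p₀ s * L s + b * ∑ s ∈ F, pow Q n p₀ s)
            + ∑ k ∈ range n, ∑' s, pow Q k p₀ s * g s := by gcongr
      _ = (∑' s, pow Q n p₀ s * L s + ∑ k ∈ range n, ∑' s, pow Q k p₀ s * g s)
            + b * ∑ s ∈ F, pow Q n p₀ s := by ring
      _ ≤ (L p₀ + b * ∑ k ∈ range n, ∑ s ∈ F, pow Q k p₀ s) + b * ∑ s ∈ F, pow Q n p₀ s := by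
        gcongr
      _ = L p₀ + b * ∑ k ∈ range (n + 1), ∑ s ∈ F, pow Q k p₀ s := by
        rw [sum_range_succ]; ring

noncomputable def cesaro (Q : S → S → ℝ≥0∞) (p₀ : S) (n : ℕ) (s : S) : ℝ≥0∞ :=
  (n : ℝ≥0∞)⁻¹ * ∑ k ∈ range n, pow Q k p₀ s

theorem tsum_cesaro_mul (Q : S → S → ℝ≥0∞) (p₀ : S) (n : ℕ) (f : S → ℝ≥0∞) :
    ∑' s, cesaro Q p₀ n s * f s = (n : ℝ≥0∞)⁻¹ * ∑ k ∈ range n, ∑' s, pow Q k p₀ s * f s := by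
  simp only [cesaro, mul_assoc, sum_mul, ENNReal.tsum_mul_left]
  rw [Summable.tsum_finsetSum fun _ _ => ENNReal.summable]

theorem IsStochastic.tsum_cesaro (hQ : IsStochastic Q) (p₀ : S) {n : ℕ} (hn : n ≠ 0) :
    ∑' s, cesaro Q p₀ n s = 1 := by
  simpa [isStochastic_pow hQ _ _, ENNReal.inv_mul_cancel, hn] using tsum_cesaro_mul Q p₀ n 1

theorem IsStochastic.push_cesaro_le (hQ : IsStochastic Q) (p₀ : S) (n : ℕ) (t : S) :
    push Q (cesaro Q p₀ n) t ≤ cesaro Q p₀ n t + (n : ℝ≥0∞)⁻¹ := by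
  have hshift : ∑ k ∈ range n, pow Q (k + 1) p₀ t ≤ ∑ k ∈ range n, pow Q k p₀ t + 1 :=
    calc ∑ k ∈ range n, pow Q (k + 1) p₀ t
        ≤ ∑ k ∈ range n, pow Q (k + 1) p₀ t + pow Q 0 p₀ t := le_self_add
      _ = ∑ k ∈ range n, pow Q k p₀ t + pow Q n p₀ t := by
        rw [← sum_range_succ' (fun k => pow Q k p₀ t), sum_range_succ]
      _ ≤ ∑ k ∈ range n, pow Q k p₀ t + 1 := by gcongr; exact (isStochastic_pow hQ n).le_one p₀ t
  calc push Q (cesaro Q p₀ n) t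
      = (n : ℝ≥0∞)⁻¹ * ∑ k ∈ range n, pow Q (k + 1) p₀ t := by
        simp only [push, tsum_cesaro_mul, pow_succ']
    _ ≤ (n : ℝ≥0∞)⁻¹ * (∑ k ∈ range n, pow Q k p₀ t + 1) := by gcongr
    _ = cesaro Q p₀ n t + (n : ℝ≥0∞)⁻¹ := by rw [mul_add, mul_one, cesaro]

theorem tsum_cesaro_mul_le
    (hdrift : ∀ s, ∑' t, Q s t * L t + g s ≤ L s + if s ∈ F then b else 0) (p₀ : S) (n : ℕ) :
    ∑' s, cesaro Q p₀ n s * g s ≤ (n : ℝ≥0∞)⁻¹ * L p₀ + b * ∑ s ∈ F, cesaro Q p₀ n s := by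
  have hF : ∑ s ∈ F, cesaro Q p₀ n s = (n : ℝ≥0∞)⁻¹ * ∑ k ∈ range n, ∑ s ∈ F, pow Q k p₀ s := by
    simp only [cesaro, ← mul_sum]; rw [sum_comm]
  rw [tsum_cesaro_mul, hF]
  calc (n : ℝ≥0∞)⁻¹ * ∑ k ∈ range n, ∑' s, pow Q k p₀ s * g s
      ≤ (n : ℝ≥0∞)⁻¹ * (L p₀ + b * ∑ k ∈ range n, ∑ s ∈ F, pow Q k p₀ s) := by
        gcongr; exact sum_range_tsum_pow_mul_le hdrift p₀ n
    _ = _ := by ring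

theorem exists_push_eq_of_drift (hQ : IsStochastic Q) {p₀ : S} (hL : L p₀ ≠ ⊤)
    (hg : ∀ s, 1 ≤ g s) (hg_top : ∀ s, g s ≠ ⊤) (hb : b ≠ ⊤)
    (hdrift : ∀ s, ∑' t, Q s t * L t + g s ≤ L s + if s ∈ F then b else 0) :
    ∃ ν : S → ℝ≥0∞, push Q ν = ν ∧ ∑' s, ν s ≠ 0 ∧ ∑' s, ν s * g s ≠ ⊤ := by
  set U := Ultrafilter.of (atTop : Filter ℕ)
  have hU : (U : Filter ℕ) ≤ atTop := Ultrafilter.of_le _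
  obtain ⟨ν, hν⟩ : ∃ ν : S → ℝ≥0∞, ∀ s, Tendsto (cesaro Q p₀ · s) U (𝓝 (ν s)) :=
    ⟨fun s => (U.map (cesaro Q p₀ · s)).lim, fun s => by
      simpa [Tendsto, Ultrafilter.coe_map] using (U.map (cesaro Q p₀ · s)).le_nhds_lim⟩
  have hpos : ∀ᶠ n in (U : Filter ℕ), n ≠ 0 := hU (eventually_ne_atTop 0)
  have hinv : Tendsto (fun n : ℕ => (n : ℝ≥0∞)⁻¹) U (𝓝 0) :=
    ENNReal.tendsto_inv_nat_nhds_zero.mono_left hU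
  have hinvL : Tendsto (fun n : ℕ => (n : ℝ≥0∞)⁻¹ * L p₀) U (𝓝 0) := by
    simpa using ENNReal.Tendsto.mul_const hinv (Or.inr hL)
  have hmass : ∑' s, ν s ≤ 1 := by
    simpa using tsum_mul_le_of_tendsto hν (f := 1) (by simp) tendsto_const_nhds
      (hpos.mono fun n hn => by simp [hQ.tsum_cesaro p₀ hn])
  have hmoment : ∑' s, ν s * g s ≤ b := by
    refine tsum_mul_le_of_tendsto hν hg_top (by simpa using hinvL.add_const b)
      (hpos.mono fun n hn => (tsum_cesaro_mul_le hdrift p₀ n).trans ?_)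
    gcongr
    exact mul_le_of_le_one_right' ((ENNReal.sum_le_tsum F).trans (hQ.tsum_cesaro p₀ hn).le)
  have hmassF : 1 ≤ b * ∑ s ∈ F, ν s := by
    refine ge_of_tendsto (by simpa using hinvL.add (ENNReal.Tendsto.const_mul
      (tendsto_finsetSum F fun s _ => hν s) (Or.inr hb))) (hpos.mono fun n hn => ?_)
    calc 1 = ∑' s, cesaro Q p₀ n s := (hQ.tsum_cesaro p₀ hn).symm
      _ ≤ ∑' s, cesaro Q p₀ n s * g s := ENNReal.tsum_le_tsum fun s => le_mul_of_one_le_right' (hg s)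
      _ ≤ _ := tsum_cesaro_mul_le hdrift p₀ n
  have hsub : ∀ t, push Q ν t ≤ ν t := fun t =>
    tsum_mul_le_of_tendsto hν (hQ.ne_top · t) (by simpa using (hν t).add hinv)
      (Eventually.of_forall fun n => hQ.push_cesaro_le p₀ n t)
  refine ⟨ν, hQ.push_eq_of_le hsub (ne_top_of_le_ne_top one_ne_top hmass), fun h0 => ?_,
    ne_top_of_le_ne_top hb hmoment⟩
  have hF0 : ∑ s ∈ F, ν s = 0 := le_antisymm ((ENNReal.sum_le_tsum F).trans h0.le) bot_le
  simp [hF0] at hmassF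

end Drift

noncomputable def occupation (P : S → S → ℝ≥0∞) (T : S → ℕ) (ν : S → ℝ≥0∞) (t : S) : ℝ≥0∞ :=
  ∑' s, ν s * ∑ k ∈ range (T s), pow P k s t

theorem IsStochastic.tsum_occupation {P : S → S → ℝ≥0∞} (hP : IsStochastic P) (T : S → ℕ)
    (ν : S → ℝ≥0∞) : ∑' t, occupation P T ν t = ∑' s, ν s * T s := by
  simp only [occupation]
  rw [ENNReal.tsum_comm]
  refine tsum_congr fun s => ?_
  rw [ENNReal.tsum_mul_left, Summable.tsum_finsetSum fun _ _ => ENNReal.summable]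
  simp [isStochastic_pow hP _ s]

theorem push_occupation (P : S → S → ℝ≥0∞) (T : S → ℕ) (ν : S → ℝ≥0∞) (t : S) :
    push P (occupation P T ν) t = ∑' s, ν s * ∑ k ∈ range (T s), pow P (k + 1) s t := by
  simp only [push, occupation, pow_succ', ← ENNReal.tsum_mul_right, mul_assoc, sum_mul]
  rw [ENNReal.tsum_comm]
  refine tsum_congr fun s => ?_
  rw [ENNReal.tsum_mul_left, Summable.tsum_finsetSum fun _ _ => ENNReal.summable]

theorem push_occupation_eq {P : S → S → ℝ≥0∞} {T : S → ℕ} {ν : S → ℝ≥0∞}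
    (hν : push (fun s => pow P (T s) s) ν = ν) (hν_top : ∀ s, ν s ≠ ⊤) :
    push P (occupation P T ν) = occupation P T ν := by
  ext t
  refine (ENNReal.add_left_inj (hν_top t)).mp ?_
  calc push P (occupation P T ν) t + ν t
      = ∑' s, ν s * ∑ k ∈ range (T s + 1), pow P k s t := by
        rw [push_occupation, ← tsum_mul_pow_zero ν P t, ← ENNReal.tsum_add]
        simp only [← mul_add, sum_range_succ']
    _ = occupation P T ν t + push (fun s => pow P (T s) s) ν t := by
        simp only [occupation, push, ← ENNReal.tsum_add, ← mul_add, sum_range_succ]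
    _ = occupation P T ν t + ν t := by rw [hν]

theorem exists_push_eq_of_drift_at_times {P : S → S → ℝ≥0∞} (hP : IsStochastic P)
    {L : S → ℝ≥0∞} {p₀ : S} (hL : L p₀ ≠ ⊤) {T : S → ℕ} (hT : ∀ s, 1 ≤ T s) {F : Finset S}
    {b : ℝ≥0∞} (hb : b ≠ ⊤)
    (hdrift : ∀ s, ∑' t, pow P (T s) s t * L t + T s ≤ L s + if s ∈ F then b else 0) :
    ∃ π : S → ℝ≥0∞, push P π = π ∧ ∑' s, π s = 1 := by
  obtain ⟨ν, hν, hν0, hνT⟩ := exists_push_eq_of_drift (fun s => isStochastic_pow hP (T s) s)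
    hL (g := fun s => T s) (fun s => by exact_mod_cast hT s) (fun _ => natCast_ne_top _) hb hdrift
  have hν_top : ∀ s, ν s ≠ ⊤ := fun s => ne_top_of_le_ne_top hνT
    ((ENNReal.le_tsum s).trans' (le_mul_of_one_le_right' (by exact_mod_cast hT s)))
  refine exists_push_eq_tsum_eq_one (push_occupation_eq hν hν_top) ?_ ?_
  · rw [hP.tsum_occupation]
    exact ne_bot_of_le_ne_bot hν0
      (ENNReal.tsum_le_tsum fun s => le_mul_of_one_le_right' (by exact_mod_cast hT s))
  · rwa [hP.tsum_occupation]

section OfReal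

variable {P : S → S → ℝ}

theorem kpow_eq_toReal_pow (hP0 : ∀ s t, 0 ≤ P s t)
    (hP : IsStochastic fun s t => ENNReal.ofReal (P s t)) (n : ℕ) (s t : S) :
    kpow P n s t = (pow (fun s t => ENNReal.ofReal (P s t)) n s t).toReal := by
  induction n generalizing s with
  | zero => by_cases h : s = t <;> simp [kpow, pow, h]
  | succ n ih =>
    rw [kpow, pow, ENNReal.tsum_toReal_eq fun u =>
      mul_ne_top ofReal_ne_top ((isStochastic_pow hP n).ne_top u t)]
    simp only [ih, ENNReal.toReal_mul, ENNReal.toReal_ofReal (hP0 _ _)]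

theorem kpow_nonneg (hP0 : ∀ s t, 0 ≤ P s t)
    (hP : IsStochastic fun s t => ENNReal.ofReal (P s t)) (n : ℕ) (s t : S) :
    0 ≤ kpow P n s t :=
  kpow_eq_toReal_pow hP0 hP n s t ▸ ENNReal.toReal_nonneg

theorem tsum_pow_mul_ofReal (hP0 : ∀ s t, 0 ≤ P s t)
    (hP : IsStochastic fun s t => ENNReal.ofReal (P s t)) {f : S → ℝ} (hf : ∀ t, 0 ≤ f t)
    {n : ℕ} {s : S} (hsum : Summable fun t => kpow P n s t * f t) :
    ∑' t, pow (fun s t => ENNReal.ofReal (P s t)) n s t * ENNReal.ofReal (f t)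
      = ENNReal.ofReal (∑' t, kpow P n s t * f t) := by
  have hkpow : ∀ t, 0 ≤ kpow P n s t := fun t => kpow_nonneg hP0 hP n s t
  rw [ENNReal.ofReal_tsum_of_nonneg (fun t => mul_nonneg (hkpow t) (hf t)) hsum]
  refine tsum_congr fun t => ?_
  rw [ENNReal.ofReal_mul (hkpow t), kpow_eq_toReal_pow hP0 hP,
    ENNReal.ofReal_toReal ((isStochastic_pow hP n).ne_top s t)]

theorem tsum_pow_mul_ofReal_div_add_le (hP0 : ∀ s t, 0 ≤ P s t)
    (hP : IsStochastic fun s t => ENNReal.ofReal (P s t)) {L : S → ℝ} (hL0 : ∀ t, 0 ≤ L t)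
    {T : S → ℕ} {c : ℝ} (hc : 0 < c) {s : S} (hsum : Summable fun t => kpow P (T s) s t * L t)
    {z : ℝ} (h : ∑' t, kpow P (T s) s t * L t + c * T s ≤ L s + z) :
    ∑' t, pow (fun s t => ENNReal.ofReal (P s t)) (T s) s t * ENNReal.ofReal (L t / c) + T s
      ≤ ENNReal.ofReal (L s / c) + ENNReal.ofReal (z / c) := by
  rw [tsum_pow_mul_ofReal hP0 hP (fun t => div_nonneg (hL0 t) hc.le)
    (by simpa only [mul_div_assoc] using hsum.div_const c)]
  simp only [← mul_div_assoc, tsum_div_const]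
  refine ENNReal.ofReal_add_natCast_le (div_nonneg (tsum_nonneg fun t =>
    mul_nonneg (kpow_nonneg hP0 hP _ _ _) (hL0 t)) hc.le) ?_
  have hdiv := div_le_div_of_nonneg_right h hc.le
  rwa [add_div, add_div, mul_div_cancel_left₀ _ hc.ne'] at hdiv

end OfReal

end DiscreteKernel

open DiscreteKernel in
theorem stmt_11_general (P : ℕ × ℕ → ℕ × ℕ → ℝ)
    (hP0 : ∀ p p', 0 ≤ P p p') (hP1 : ∀ p, ∑' p', P p p' = 1)
    (L : ℕ × ℕ → ℝ) (hL0 : ∀ p, 0 ≤ L p)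
    (T : ℕ × ℕ → ℕ) (hT1 : ∀ p, 1 ≤ T p)
    (MX MY : ℕ) (c : ℝ) (hc : 0 < c)
    (hInt : ∀ p n, Summable (fun p' => kpow P n p p' * L p'))
    (hbdd : ∃ B : ℝ, ∀ x y, x ≤ MX → y ≤ MY →
      (∑' p', kpow P (T (x, y)) (x, y) p' * L p') - L (x, y) ≤ B)
    (hdrift : ∀ x y, (MX < x ∨ MY < y) →
      (∑' p', kpow P (T (x, y)) (x, y) p' * L p') - L (x, y) ≤ -c * T (x, y)) :
    PositiveRecurrent P := by
  obtain ⟨B, hB⟩ := hbdd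
  have hP := isStochastic_ofReal hP0 hP1
  set F := range (MX + 1) ×ˢ range (MY + 1)
  have hdriftE : ∀ p, ∑' q, pow (fun s t => ENNReal.ofReal (P s t)) (T p) p q
      * ENNReal.ofReal (L q / c) + T p ≤ ENNReal.ofReal (L p / c)
        + if p ∈ F then ENNReal.ofReal ((B + c * F.sup T) / c) else 0 := by
    rintro ⟨x, y⟩
    have hsum := hInt (x, y) (T (x, y))
    by_cases hp : (x, y) ∈ F
    · have hxy : x ≤ MX ∧ y ≤ MY := by simpa [F, Nat.lt_succ_iff] using hp
      have hT : c * T (x, y) ≤ c * F.sup T :=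
        mul_le_mul_of_nonneg_left (by exact_mod_cast le_sup hp) hc.le
      rw [if_pos hp]
      exact tsum_pow_mul_ofReal_div_add_le hP0 hP hL0 hc hsum (by linarith [hB x y hxy.1 hxy.2])
    · have hxy : MX < x ∨ MY < y := by
        simp only [F, mem_product, mem_range] at hp
        omega
      simpa [hp] using tsum_pow_mul_ofReal_div_add_le hP0 hP hL0 hc hsum (z := 0)
        (by linarith [hdrift x y hxy])
  obtain ⟨π, hπ, h1⟩ := exists_push_eq_of_drift_at_times hP (p₀ := (0, 0)) ofReal_ne_top hT1
    ofReal_ne_top hdriftE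
  exact positiveRecurrent_of_push_eq hP0 hπ h1

/-- the Foster–Lyapunov criterion with state-dependent drift
times (Foss–Konstantopoulos) for a chain on `ℤ₊²`. -/
theorem stmt_11 (P : ℕ × ℕ → ℕ × ℕ → ℝ)
    (hP0 : ∀ p p', 0 ≤ P p p') (hP1 : ∀ p, ∑' p', P p p' = 1)
    (hirr : IrreducibleKernel P) (hap : AperiodicKernel P)
    (L : ℕ × ℕ → ℝ) (hL0 : ∀ p, 0 ≤ L p)
    (T : ℕ × ℕ → ℕ) (hT1 : ∀ p, 1 ≤ T p)
    (MX MY : ℕ) (c : ℝ) (hc : 0 < c)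
    (hInt : ∀ p n, Summable (fun p' => kpow P n p p' * L p'))
    (hratio : ∃ K : ℝ, ∀ p, (T p : ℝ) ≤ K * L p)
    (hbdd : ∃ B : ℝ, ∀ x y, x ≤ MX → y ≤ MY →
      (∑' p', kpow P (T (x, y)) (x, y) p' * L p') - L (x, y) ≤ B)
    (hdrift : ∀ x y, (MX < x ∨ MY < y) →
      (∑' p', kpow P (T (x, y)) (x, y) p' * L p') - L (x, y) ≤ -c * T (x, y)) :
    PositiveRecurrent P :=
  stmt_11_general P hP0 hP1 L hL0 T hT1 MX MY c hc hInt hbdd hdrift
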